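/- arXiv:2201.10378 — 3 statements merged into one kernel-verified Lean document; each statement's English description precedes it below -/
import Mathlib

section
/- Every countable group G embeds into a finitely generated group of the form H' × ℤ × ℤ; that is, there exist a finitely generated group H' and an injective group homomorphism from G into H' × ℤ × ℤ. -/
/-!
Embed `G` (enumerated as `g : ℤ → G`) into `G ∗ F`, with `F` free on `x_n, n ∈ ℤ`. Since
`x_n ↦ g_n x_n` also embeds `F`, an HNN extension adds a letter `t` with `t x_n t⁻¹ = g_n x_n`,
so `G` lies in the subgroup generated by `t` and the `x_n`. The `x_n` still generate a free
subgroup, so a second HNN extension adds a letter `s` with `s x_n s⁻¹ = x_{n+1}`. The result is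
generated by `s`, `t` and `x_0`, and contains `G` because HNN extensions embed their base group.
-/

open Function Monoid Coprod

universe u

noncomputable section

section EmbeddingsHNNExtension

variable {F K : Type*} [Group F] [Group K] {i₁ i₂ : F →* K}

abbrev EmbeddingsHNNExtension (h₁ : Injective i₁) (h₂ : Injective i₂) : Type _ :=
  HNNExtension K i₁.range i₂.range
    ((MonoidHom.ofInjective h₁).symm.trans (MonoidHom.ofInjective h₂))

namespace EmbeddingsHNNExtension

variable {h₁ : Injective i₁} {h₂ : Injective i₂}

theorem of_right_eq_conj (w : F) :
    (HNNExtension.of (i₂ w) : EmbeddingsHNNExtension h₁ h₂) =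
      HNNExtension.t * HNNExtension.of (i₁ w) * HNNExtension.t⁻¹ := by
  have hw : (MonoidHom.ofInjective h₁).symm ⟨i₁ w, w, rfl⟩ = w :=
    (MonoidHom.ofInjective h₁).symm_apply_eq.2
      (Subtype.ext (MonoidHom.ofInjective_apply h₁).symm)
  simpa [hw, MonoidHom.ofInjective_apply] using
    HNNExtension.equiv_eq_conj (φ := (MonoidHom.ofInjective h₁).symm.trans
      (MonoidHom.ofInjective h₂)) ⟨i₁ w, w, rfl⟩

end EmbeddingsHNNExtension

end EmbeddingsHNNExtension

theorem HNNExtension.eq_top_of_of_mem_of_t_mem {G : Type*} [Group G] {A B : Subgroup G}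
    {φ : A ≃* B} {C : Subgroup (HNNExtension G A B φ)} (hof : ∀ g, of g ∈ C)
    (ht : t ∈ C) : C = ⊤ :=
  eq_top_iff.2 fun x _ ↦ x.induction_on hof ht (fun _ _ ↦ C.mul_mem) (fun _ ↦ C.inv_mem)

theorem Coprod.eq_top_of_inl_mem_of_inr_mem {M N : Type*} [Group M] [Group N]
    {C : Subgroup (M ∗ N)} (hinl : ∀ m, inl m ∈ C) (hinr : ∀ n, inr n ∈ C) : C = ⊤ := by
  rw [eq_top_iff, ← range_inl_sup_range_inr]
  exact sup_le (by rintro _ ⟨m, rfl⟩; exact hinl m) (by rintro _ ⟨n, rfl⟩; exact hinr n)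

namespace HigmanNeumannNeumann

variable {G : Type u} [Group G] (g : ℤ → G)

def twist : FreeGroup ℤ →* G ∗ FreeGroup ℤ :=
  FreeGroup.lift fun n ↦ Coprod.inl (g n) * Coprod.inr (FreeGroup.of n)

theorem twist_of (n : ℤ) : twist g (.of n) = Coprod.inl (g n) * Coprod.inr (.of n) :=
  FreeGroup.lift_apply_of

theorem twist_injective : Injective (twist g) := by
  have : Coprod.snd.comp (twist g) = MonoidHom.id _ := by ext; simp [twist]
  exact LeftInverse.injective (DFunLike.congr_fun this)

abbrev H₁ : Type u := EmbeddingsHNNExtension (Coprod.inr_injective (M := G)) (twist_injective g)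

def gen : FreeGroup ℤ →* H₁ g := HNNExtension.of.comp Coprod.inr

theorem gen_injective : Injective (gen g) :=
  (HNNExtension.of_injective _).comp Coprod.inr_injective

def shift : FreeGroup ℤ ≃* FreeGroup ℤ := FreeGroup.freeGroupCongr (Equiv.addRight 1)

abbrev H₂ : Type u :=
  EmbeddingsHNNExtension (gen_injective g)
    (i₂ := (gen g).comp (shift : FreeGroup ℤ →* FreeGroup ℤ))
    ((gen_injective g).comp (shift : FreeGroup ℤ ≃* FreeGroup ℤ).injective)

theorem of_inl_eq (n : ℤ) :
    (HNNExtension.of (Coprod.inl (g n)) : H₁ g) =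
      HNNExtension.t * gen g (.of n) * HNNExtension.t⁻¹ * (gen g (.of n))⁻¹ := by
  calc HNNExtension.of (Coprod.inl (g n))
      _ = HNNExtension.of (twist g (.of n)) * (gen g (.of n))⁻¹ := by
        rw [twist_of, map_mul]; exact (mul_inv_cancel_right _ _).symm
      _ = _ := by rw [EmbeddingsHNNExtension.of_right_eq_conj]; rfl

theorem of_gen_succ (n : ℤ) :
    (HNNExtension.of (gen g (.of (n + 1))) : H₂ g) =
      HNNExtension.t * HNNExtension.of (gen g (.of n)) * HNNExtension.t⁻¹ := by
  rw [← EmbeddingsHNNExtension.of_right_eq_conj]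
  simp [shift]

theorem of_gen_eq_zpow_conj (n : ℤ) :
    (HNNExtension.of (gen g (.of n)) : H₂ g) =
      HNNExtension.t ^ n * HNNExtension.of (gen g (.of 0)) * HNNExtension.t ^ (-n) := by
  induction n using Int.induction_on with
  | zero => simp
  | succ k ih => rw [of_gen_succ, ih]; group
  | pred k ih =>
    have h := of_gen_succ g (-k - 1)
    rw [sub_add_cancel, ih] at h
    calc HNNExtension.of (gen g (.of (-k - 1)))
        _ = HNNExtension.t⁻¹ * (HNNExtension.t * HNNExtension.of (gen g (.of (-k - 1))) *
            HNNExtension.t⁻¹) * HNNExtension.t := by group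
        _ = _ := by rw [← h]; group

def generators : Set (H₂ g) :=
  {HNNExtension.t, HNNExtension.of HNNExtension.t, HNNExtension.of (gen g (.of 0))}

theorem of_gen_mem_closure (n : ℤ) :
    HNNExtension.of (gen g (.of n)) ∈ Subgroup.closure (generators g) := by
  have hs : HNNExtension.t ∈ Subgroup.closure (generators g) :=
    Subgroup.subset_closure (by simp [generators])
  rw [of_gen_eq_zpow_conj]
  exact mul_mem (mul_mem (zpow_mem hs n) (Subgroup.subset_closure (by simp [generators])))
    (zpow_mem hs (-n))

theorem of_of_mem_closure (hg : Surjective g) (k : G ∗ FreeGroup ℤ) :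
    HNNExtension.of (HNNExtension.of k) ∈ Subgroup.closure (generators g) := by
  set C := Subgroup.closure (generators g)
  suffices C.comap (HNNExtension.of.comp HNNExtension.of) = ⊤ from this.ge (Subgroup.mem_top k)
  refine Coprod.eq_top_of_inl_mem_of_inr_mem (fun x ↦ ?_) (fun w ↦ ?_)
  · have ht : HNNExtension.of HNNExtension.t ∈ C :=
      Subgroup.subset_closure (by simp [generators])
    obtain ⟨n, rfl⟩ := hg x
    have hx := of_gen_mem_closure g n
    simpa [of_inl_eq] using
      C.mul_mem (C.mul_mem (C.mul_mem ht hx) (C.inv_mem ht)) (C.inv_mem hx)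
  · have hF : C.comap ((HNNExtension.of.comp HNNExtension.of).comp Coprod.inr) = ⊤ := by
      rw [eq_top_iff, ← FreeGroup.closure_range_of, Subgroup.closure_le]
      rintro _ ⟨n, rfl⟩
      exact of_gen_mem_closure g n
    exact hF.ge (Subgroup.mem_top w)

theorem closure_generators (hg : Surjective g) : Subgroup.closure (generators g) = ⊤ := by
  have hH₁ : (Subgroup.closure (generators g)).comap HNNExtension.of = ⊤ :=
    HNNExtension.eq_top_of_of_mem_of_t_mem (of_of_mem_closure g hg)
      (Subgroup.subset_closure (by simp [generators]))
  exact HNNExtension.eq_top_of_of_mem_of_t_mem (fun h ↦ hH₁.ge (Subgroup.mem_top h))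
    (Subgroup.subset_closure (by simp [generators]))

theorem exists_injective_hom_to_fg_of_countable (G : Type u) [Group G] [Countable G] :
    ∃ (H : Type u) (_ : Group H), Group.FG H ∧ ∃ f : G →* H, Injective f := by
  obtain ⟨e, he⟩ := exists_surjective_nat G
  have hg : Surjective (e ∘ Int.toNat) := he.comp fun m ↦ ⟨m, Int.toNat_natCast m⟩
  refine ⟨H₂ (e ∘ Int.toNat), inferInstance,
    Group.fg_iff.2 ⟨_, closure_generators _ hg, ((Set.finite_singleton _).insert _).insert _⟩,
    (HNNExtension.of.comp HNNExtension.of).comp Coprod.inl, ?_⟩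
  exact (HNNExtension.of_injective _).comp
    ((HNNExtension.of_injective _).comp Coprod.inl_injective)

end HigmanNeumannNeumann

end

/-- Every countable group `G` embeds into a finitely generated group of the form
`H' × ℤ × ℤ`. -/
theorem countable_group_embeds_in_fg_prod_int_int (G : Type*) [Group G] [Countable G] :
    ∃ (H' : Type) (_ : Group H'), Group.FG H' ∧
      ∃ f : G →* H' × Multiplicative ℤ × Multiplicative ℤ, Function.Injective f := by
  have : Countable (Shrink.{0} G) := Countable.of_equiv G (equivShrink.{0} G)
  obtain ⟨H, _, hH, f, hf⟩ :=
    HigmanNeumannNeumann.exists_injective_hom_to_fg_of_countable (Shrink.{0} G)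
  let e : G ≃* Shrink.{0} G := Shrink.mulEquiv.symm
  refine ⟨H, inferInstance, hH, (MonoidHom.inl _ _).comp (f.comp e.toMonoidHom), ?_⟩
  exact fun _ _ h ↦ e.injective (hf (congrArg Prod.fst h))
end

section
/- Let H' be a finitely generated group with finite generating set S' and identity e, let H := H' × ℤ × ℤ and S := {(s', 0, 0) | s' ∈ S'} ∪ {(e, 1, 0), (e, 0, 1)}. Then the Cayley graph Cay_S(H) is one-ended: its space of ends has exactly one element. -/
/-!
Identify `H' × ℤ × ℤ` with the grid `(H' × ℤ) × ℤ`. Each row `{(h, a)} × ℤ` is connected by the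
steps `(e, 0, ±1)`, and each column `H' × ℤ × {b}` by the steps `(s', 0, 0)` and `(e, ±1, 0)`,
since `S'` generates `H'`. A finite set `K` meets only finitely many rows and columns; the
remaining ones all lie in a single component of the complement of `K`, because every row crosses
every column, and every vertex outside the finite box spanned by the projections of `K` lies on
one of them. So for every finite `K` at most one component of the complement is infinite, which
forces any two ends to agree. The graph is locally finite, connected and infinite, so by König's
lemma it has an end.
-/

/-- The Cayley graph of a group `H` with respect to a subset `S`: the simple graph on
vertex set `H` in which distinct vertices `x`, `y` are adjacent iff `x⁻¹ * y ∈ S ∪ S⁻¹`. -/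
def cayleyGraph (H : Type*) [Group H] (S : Set H) : SimpleGraph H where
  Adj x y := x ≠ y ∧ x⁻¹ * y ∈ S ∪ S⁻¹
  symm := by
    constructor
    rintro x y ⟨hne, h⟩
    refine ⟨hne.symm, ?_⟩
    have : y⁻¹ * x = (x⁻¹ * y)⁻¹ := by group
    rw [this]
    rcases h with h | h
    · exact Set.mem_union_right _ (Set.inv_mem_inv.mpr h)
    · exact Set.mem_union_left _ (by simpa using h)
  loopless := ⟨fun x h => h.1 rfl⟩

open Function

namespace SimpleGraph

variable {V : Type*} {G : SimpleGraph V}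

lemma Reachable.induce_of_subset {s t : Set V} (ht : (G.induce t).Preconnected) (hts : t ⊆ s)
    {u v : s} (hu : ↑u ∈ t) (hv : ↑v ∈ t) : (G.induce s).Reachable u v :=
  (ht ⟨u, hu⟩ ⟨v, hv⟩).map (G.induceHomOfLE hts).toHom

lemma Preconnected.induce_reachable_of_hom {V' : Type*} {G' : SimpleGraph V'}
    (hG' : G'.Preconnected) (f : G' →g G) {s : Set V} (hf : ∀ x, f x ∈ s) {u v : s} (hu : ∃ x, f x = u)
    (hv : ∃ y, f y = v) : (G.induce s).Reachable u v := by
  obtain ⟨x, hx⟩ := hu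
  obtain ⟨y, hy⟩ := hv
  obtain rfl : u = ⟨f x, hf x⟩ := Subtype.ext hx.symm
  obtain rfl : v = ⟨f y, hf y⟩ := Subtype.ext hy.symm
  exact (hG' x y).map (⟨fun x => ⟨f x, hf x⟩, f.map_rel⟩ : G' →g G.induce s)

lemma ComponentCompl.eq_of_infinite_of_reachable {K B : Set V} (hB : B.Finite) {v₀ : V}
    (h₀ : v₀ ∉ K) (hreach : ∀ v (hv : v ∉ K), v ∉ B → (G.induce Kᶜ).Reachable ⟨v, hv⟩ ⟨v₀, h₀⟩)
    {C : G.ComponentCompl K} (hC : C.supp.Infinite) : C = G.componentComplMk h₀ := by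
  obtain ⟨v, ⟨hvK, rfl⟩, hvB⟩ := Set.not_subset.mp fun hCB => hC (hB.subset hCB)
  exact ConnectedComponent.sound (hreach v hvK hvB)

lemma end_nonempty [LocallyFinite G] [Fact G.Preconnected] [Infinite V] : G.end.Nonempty := by
  have (K : (Finset V)ᵒᵖ) : Finite (G.componentComplFunctor.obj K) :=
    G.componentCompl_finite K.unop
  have (K : (Finset V)ᵒᵖ) : Nonempty (G.componentComplFunctor.obj K) :=
    G.componentCompl_nonempty_of_infinite K.unop
  exact nonempty_sections_of_finite_inverse_system _

lemma end_subsingleton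
    (h : ∀ (K : Finset V) (C D : G.ComponentCompl K), C.supp.Infinite → D.supp.Infinite → C = D) :
    G.end.Subsingleton := by
  have hinf {e} (he : e ∈ G.end) (K : (Finset V)ᵒᵖ) : (e K).supp.Infinite :=
    (e K).infinite_iff_in_all_ranges.mpr fun L hKL =>
      ⟨e (Opposite.op L), he (CategoryTheory.opHomOfLE hKL)⟩
  intro e he e' he'
  funext K
  exact h K.unop _ _ (hinf he K) (hinf he' K)

variable {α β : Type*}

def HasConnectedLines (G : SimpleGraph V) (e : V ≃ α × β) : Prop :=
  (∀ a, (G.induce {v | (e v).1 = a}).Preconnected) ∧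
    ∀ b, (G.induce {v | (e v).2 = b}).Preconnected

namespace HasConnectedLines

variable {e : V ≃ α × β}

lemma preconnected (hG : G.HasConnectedLines e) : G.Preconnected := by
  intro u v
  let w := e.symm ((e u).1, (e v).2)
  have huw := (hG.1 (e u).1 ⟨u, rfl⟩ ⟨w, by simp [w]⟩).map (Embedding.induce _).toHom
  have hwv := (hG.2 (e v).2 ⟨w, by simp [w]⟩ ⟨v, rfl⟩).map (Embedding.induce _).toHom
  exact huw.trans hwv

lemma infinite_componentCompl_eq [Infinite α] [Infinite β] (hG : G.HasConnectedLines e)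
    (K : Finset V) {C D : G.ComponentCompl K} (hC : C.supp.Infinite) (hD : D.supp.Infinite) :
    C = D := by
  classical
  set A := K.image fun v => (e v).1
  set B := K.image fun v => (e v).2
  have hrow {a} (ha : a ∉ A) : {v | (e v).1 = a} ⊆ (K : Set V)ᶜ := fun v hv hvK =>
    ha (hv ▸ Finset.mem_image_of_mem _ hvK)
  have hcol {b} (hb : b ∉ B) : {v | (e v).2 = b} ⊆ (K : Set V)ᶜ := fun v hv hvK =>
    hb (hv ▸ Finset.mem_image_of_mem _ hvK)
  obtain ⟨a₀, ha₀⟩ := Infinite.exists_notMem_finset A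
  obtain ⟨b₀, hb₀⟩ := Infinite.exists_notMem_finset B
  have h₀ : e.symm (a₀, b₀) ∉ (K : Set V) := hrow ha₀ (by simp)
  have hbox : (e ⁻¹' (A ×ˢ B : Set (α × β))).Finite := (Set.toFinite _).preimage e.injective.injOn
  have hreach : ∀ v (hv : v ∉ (K : Set V)), v ∉ e ⁻¹' (A ×ˢ B : Set (α × β)) →
      (G.induce (K : Set V)ᶜ).Reachable ⟨v, hv⟩ ⟨_, h₀⟩ := by
    intro v hv hvbox
    rcases not_and_or.mp hvbox with hvA | hvB
    · let w := e.symm ((e v).1, b₀)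
      have hwK : w ∉ (K : Set V) := hcol hb₀ (by simp [w])
      have hvw : (G.induce (K : Set V)ᶜ).Reachable ⟨v, hv⟩ ⟨w, hwK⟩ :=
        .induce_of_subset (hG.1 _) (hrow hvA) rfl (by simp [w])
      exact hvw.trans (.induce_of_subset (hG.2 _) (hcol hb₀) (by simp [w]) (by simp))
    · let w := e.symm (a₀, (e v).2)
      have hwK : w ∉ (K : Set V) := hrow ha₀ (by simp [w])
      have hvw : (G.induce (K : Set V)ᶜ).Reachable ⟨v, hv⟩ ⟨w, hwK⟩ :=
        .induce_of_subset (hG.2 _) (hcol hvB) rfl (by simp [w])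
      exact hvw.trans (.induce_of_subset (hG.1 _) (hrow ha₀) (by simp [w]) (by simp))
  rw [ComponentCompl.eq_of_infinite_of_reachable hbox h₀ hreach hC,
    ComponentCompl.eq_of_infinite_of_reachable hbox h₀ hreach hD]

end HasConnectedLines

end SimpleGraph

section Cayley

variable {G H : Type*} [Group G] [Group H]

lemma cayleyGraph_neighborSet_finite {S : Set H} (hS : S.Finite) (x : H) :
    ((cayleyGraph H S).neighborSet x).Finite :=
  ((hS.union hS.inv).image (x * ·)).subset fun y ⟨_, hy⟩ => ⟨x⁻¹ * y, hy, mul_inv_cancel_left x y⟩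

lemma cayleyGraph_preconnected {S : Set H} (hS : Subgroup.closure S = ⊤) :
    (cayleyGraph H S).Preconnected := by
  suffices h : ∀ g ∈ Subgroup.closure S, ∀ x, (cayleyGraph H S).Reachable x (x * g) by
    intro x y
    simpa using h (x⁻¹ * y) (hS ▸ Subgroup.mem_top _) x
  intro g hg
  induction hg using Subgroup.closure_induction with
  | mem s hs =>
    intro x
    by_cases hxs : x = x * s
    · rw [← hxs]
    · exact SimpleGraph.Adj.reachable ⟨hxs, by simp [hs]⟩
  | one => simp
  | mul g g' _ _ hg hg' => exact fun x => (hg x).trans (by simpa [mul_assoc] using hg' (x * g))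
  | inv g _ hg => exact fun x => by simpa using (hg (x * g⁻¹)).symm

def cayleyGraphHom {S : Set G} {T : Set H} (φ : G →* H) (hφ : Injective φ) (hST : φ '' S ⊆ T)
    (x : H) : cayleyGraph G S →g cayleyGraph H T where
  toFun g := x * φ g
  map_rel' := by
    rintro g g' ⟨hne, hgg'⟩
    refine ⟨fun h => hne (hφ (mul_left_cancel h)), ?_⟩
    rw [mul_inv_rev, mul_assoc, inv_mul_cancel_left, ← map_inv, ← map_mul]
    rcases hgg' with h | h
    · exact .inl (hST ⟨_, h, rfl⟩)
    · exact .inr (hST ⟨_, h, by simp⟩)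

lemma cayleyGraph_induce_reachable {S : Set G} {T : Set H} (hS : Subgroup.closure S = ⊤)
    (φ : G →* H) (hφ : Injective φ) (hST : φ '' S ⊆ T) {s : Set H} {x : H}
    (hs : ∀ g, x * φ g ∈ s) {u v : s} (g : G) (hu : x = u) (hv : x * φ g = v) :
    ((cayleyGraph H T).induce s).Reachable u v :=
  (cayleyGraph_preconnected hS).induce_reachable_of_hom (cayleyGraphHom φ hφ hST x) hs
    ⟨1, by simpa [cayleyGraphHom] using hu⟩ ⟨g, hv⟩

end Cayley

lemma Multiplicative.closure_ofAdd_one : Subgroup.closure {Multiplicative.ofAdd (1 : ℤ)} = ⊤ :=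
  eq_top_iff.mpr fun x _ => Subgroup.mem_closure_singleton.mpr ⟨x.toAdd, by simp [← ofAdd_zsmul]⟩

section Grid

open Multiplicative

variable {H' : Type*} [Group H'] {S' : Set H'}

def gridGenerators (S' : Set H') : Set (H' × Multiplicative ℤ × Multiplicative ℤ) :=
  {p : H' × Multiplicative ℤ × Multiplicative ℤ |
      ∃ s' ∈ S', p = (s', Multiplicative.ofAdd 0, Multiplicative.ofAdd 0)} ∪
    {(1, Multiplicative.ofAdd 1, Multiplicative.ofAdd 0),
     (1, Multiplicative.ofAdd 0, Multiplicative.ofAdd 1)}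

lemma gridGenerators_finite (hS' : S'.Finite) : (gridGenerators S').Finite := by
  refine .union ((hS'.image fun s' => (s', ofAdd 0, ofAdd 0)).subset ?_) (Set.toFinite _)
  rintro _ ⟨s', hs', rfl⟩
  exact ⟨s', hs', rfl⟩

lemma cayleyGraph_gridGenerators_hasConnectedLines (hS' : Subgroup.closure S' = ⊤) :
    (cayleyGraph _ (gridGenerators S')).HasConnectedLines
      (Equiv.prodAssoc H' (Multiplicative ℤ) (Multiplicative ℤ)).symm := by
  constructor
  · rintro ⟨h, a⟩ ⟨⟨h₁, a₁, b₁⟩, hu⟩ ⟨⟨h₂, a₂, b₂⟩, hv⟩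
    obtain ⟨rfl, rfl⟩ : h₁ = h ∧ a₁ = a := by simpa using hu
    obtain ⟨rfl, rfl⟩ : h₂ = h₁ ∧ a₂ = a₁ := by simpa using hv
    exact cayleyGraph_induce_reachable closure_ofAdd_one
      ((MonoidHom.inr H' _).comp (MonoidHom.inr (Multiplicative ℤ) (Multiplicative ℤ)))
      (fun g g' h => by simpa using h) (by simp [gridGenerators]) (fun g => by simp) (b₁⁻¹ * b₂)
      rfl (by simp)
  · rintro b ⟨⟨h₁, a₁, b₁⟩, hu⟩ ⟨⟨h₂, a₂, b₂⟩, hv⟩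
    obtain rfl : b₁ = b := hu
    obtain rfl : b₁ = b₂ := hv.symm
    have hw : (h₂, a₁, b₁) ∈ {v | ((Equiv.prodAssoc _ _ _).symm v).2 = b₁} := rfl
    refine .trans (v := ⟨_, hw⟩) ?_ ?_
    · exact cayleyGraph_induce_reachable hS' (MonoidHom.inl H' _) (fun g g' h => by simpa using h)
        (by rintro _ ⟨s', hs', rfl⟩; exact Or.inl ⟨s', hs', rfl⟩) (fun g => by simp) (h₁⁻¹ * h₂)
        rfl (by simp)
    · exact cayleyGraph_induce_reachable closure_ofAdd_one
        ((MonoidHom.inr H' _).comp (MonoidHom.inl (Multiplicative ℤ) (Multiplicative ℤ)))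
        (fun g g' h => by simpa using h) (by simp [gridGenerators]) (fun g => by simp) (a₁⁻¹ * a₂)
        rfl (by simp)

end Grid

/-- If `S'` is a finite generating set of `H'`, then the Cayley graph of
`H := H' × ℤ × ℤ` with respect to `S := {(s',0,0) | s' ∈ S'} ∪ {(e,1,0), (e,0,1)}`
is one-ended: its space of ends has exactly one element. -/
theorem cayleyGraph_one_ended (H' : Type*) [Group H'] (S' : Set H')
    (hfin : S'.Finite) (hgen : Subgroup.closure S' = ⊤) :
    ∃! e, e ∈ (cayleyGraph (H' × Multiplicative ℤ × Multiplicative ℤ)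
      ({p : H' × Multiplicative ℤ × Multiplicative ℤ |
          ∃ s' ∈ S', p = (s', Multiplicative.ofAdd 0, Multiplicative.ofAdd 0)} ∪
        {(1, Multiplicative.ofAdd 1, Multiplicative.ofAdd 0),
         (1, Multiplicative.ofAdd 0, Multiplicative.ofAdd 1)})).end := by
  have hlines := cayleyGraph_gridGenerators_hasConnectedLines hgen
  have : (cayleyGraph _ (gridGenerators S')).LocallyFinite := fun x =>
    (cayleyGraph_neighborSet_finite (gridGenerators_finite hfin) x).fintype
  have : Fact (cayleyGraph _ (gridGenerators S')).Preconnected := ⟨hlines.preconnected⟩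
  obtain ⟨e, he⟩ := SimpleGraph.end_nonempty (G := cayleyGraph _ (gridGenerators S'))
  exact ⟨e, he, fun e' he' =>
    SimpleGraph.end_subsingleton (fun K _ _ => hlines.infinite_componentCompl_eq K) he' he⟩
end

section
/- Every countable group G embeds into a finitely generated group of the form H' ∗ ℤ ∗ (ℤ/2ℤ); that is, there exist a finitely generated group H' and an injective group homomorphism from G into the free product H' ∗ ℤ ∗ (ℤ/2ℤ). -/
/-!
The Higman–Neumann–Neumann embedding argument: a countable group `G` embeds
into `K = G ∗ F(ℕ)`; a ping-pong argument on reduced words shows the elements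
`gₙ·bₙ` freely generate a subgroup isomorphic to the free factor `⟨bₙ⟩`;
taking an HNN extension with stable letter conjugating one to the other, and a
second HNN extension shifting the `bₙ`, one obtains a group in which the
subgroup generated by three elements contains (a copy of) `G`.
-/

namespace HNNEmbed
open Classical

variable {G : Type} [Group G]

/-- Letters: nontrivial group elements, or free-group letters `(n, ±)`. -/
abbrev Letter (G : Type) [Group G] := {x : G // x ≠ 1} ⊕ (ℕ × Bool)

/-- Adjacency condition for reduced words. -/
def good : Letter G → Letter G → Prop
  | .inl _, .inl _ => False
  | .inr l, .inr l' => l' ≠ (l.1, !l.2)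
  | _, _ => True

/-- Reduced words. -/
def Red (L : List (Letter G)) : Prop := L.Chain' good

theorem Red.tail {x : Letter G} {L : List (Letter G)} (h : Red (x :: L)) : Red L :=
  (List.isChain_cons.mp h).2

theorem red_cons {x : Letter G} {L : List (Letter G)}
    (h : Red L) (hx : ∀ y ∈ L.head?, good x y) : Red (x :: L) :=
  List.isChain_cons.mpr ⟨hx, h⟩

theorem Red.head {x y : Letter G} {L : List (Letter G)} (h : Red (x :: y :: L)) :
    good x y := (List.isChain_cons_cons.mp h).1

noncomputable def mulL (a : G) : List (Letter G) → List (Letter G)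
  | .inl h :: rest =>
      if hah : a * h.1 = 1 then rest else .inl ⟨a * h.1, hah⟩ :: rest
  | L => if ha : a = 1 then L else .inl ⟨a, ha⟩ :: L

theorem mulL_inl (a : G) (h : {x : G // x ≠ 1}) (rest : List (Letter G)) :
    mulL a (.inl h :: rest) =
      if hah : a * h.1 = 1 then rest else .inl ⟨a * h.1, hah⟩ :: rest := rfl

theorem mulL_nil (a : G) :
    mulL a ([] : List (Letter G)) = if ha : a = 1 then [] else [.inl ⟨a, ha⟩] := rfl

theorem mulL_inr (a : G) (l : ℕ × Bool) (rest : List (Letter G)) :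
    mulL a (.inr l :: rest) =
      if ha : a = 1 then .inr l :: rest else .inl ⟨a, ha⟩ :: .inr l :: rest := rfl

theorem Red.mulL {a : G} {L : List (Letter G)} (hL : Red L) : Red (mulL a L) := by
  match L with
  | .inl h :: rest =>
    rw [mulL_inl]
    split
    · exact hL.tail
    · refine red_cons hL.tail (fun y hy => ?_)
      have := List.isChain_cons.mp hL |>.1 y hy
      cases y with
      | inl => exact this
      | inr => trivial
  | [] =>
    rw [mulL_nil]; split
    · exact List.isChain_nil
    · exact List.isChain_singleton _
  | .inr l :: rest =>
    rw [mulL_inr]; split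
    · exact hL
    · exact red_cons hL (by simp [good])

theorem mulL_one (L : List (Letter G)) : mulL 1 L = L := by
  match L with
  | .inl h :: rest =>
    rw [mulL_inl, dif_neg (by simpa using h.2)]
    congr 1
    exact congrArg Sum.inl (Subtype.ext (one_mul _))
  | [] => rw [mulL_nil, dif_pos rfl]
  | .inr l :: rest => rw [mulL_inr, dif_pos rfl]

theorem mulL_mul (a b : G) (L : List (Letter G)) (hL : Red L) :
    mulL (a * b) L = mulL a (mulL b L) := by
  match L with
  | .inl h :: rest =>
    rw [mulL_inl, mulL_inl]
    by_cases hbh : b * h.1 = 1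
    · rw [dif_pos hbh]
      have hab : (a * b) * h.1 = a := by rw [mul_assoc, hbh, mul_one]
      match rest with
      | [] =>
        rw [mulL_nil]
        by_cases ha : a = 1
        · rw [dif_pos (by rw [hab, ha]), dif_pos ha]
        · rw [dif_neg (by rw [hab]; exact ha), dif_neg ha]
          exact congrArg (fun x => [Sum.inl x]) (Subtype.ext hab)
      | .inl h' :: t => exact absurd hL.head (by simp [good])
      | .inr l :: t =>
        rw [mulL_inr]
        by_cases ha : a = 1
        · rw [dif_pos (by rw [hab, ha]), dif_pos ha]
        · rw [dif_neg (by rw [hab]; exact ha), dif_neg ha]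
          exact congrArg (fun x => Sum.inl x :: Sum.inr l :: t) (Subtype.ext hab)
    · rw [dif_neg hbh, mulL_inl]
      by_cases habh : (a * b) * h.1 = 1
      · rw [dif_pos habh, dif_pos (by rwa [← mul_assoc])]
      · rw [dif_neg habh, dif_neg (by rwa [← mul_assoc])]
        exact congrArg (fun x => Sum.inl x :: rest) (Subtype.ext (mul_assoc a b h.1))
  | [] =>
    by_cases hb : b = 1
    · rw [hb, mul_one, mulL_one]
    · conv_rhs => rw [mulL_nil, dif_neg hb, mulL_inl]
      rw [mulL_nil]
  | .inr l :: rest =>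
    by_cases hb : b = 1
    · rw [hb, mul_one, mulL_one]
    · conv_rhs => rw [mulL_inr, dif_neg hb, mulL_inl]
      rw [mulL_inr]


/-- Left multiplication by the free letter `bₙ`. -/
def mulN (n : ℕ) : List (Letter G) → List (Letter G)
  | .inr l :: rest => if l = (n, false) then rest else .inr (n, true) :: .inr l :: rest
  | L => .inr (n, true) :: L

/-- Left multiplication by `bₙ⁻¹`. -/
def invN (n : ℕ) : List (Letter G) → List (Letter G)
  | .inr l :: rest => if l = (n, true) then rest else .inr (n, false) :: .inr l :: rest
  | L => .inr (n, false) :: L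

theorem mulN_inr (n : ℕ) (l : ℕ × Bool) (rest : List (Letter G)) :
    mulN n (.inr l :: rest) =
      if l = (n, false) then rest else .inr (n, true) :: .inr l :: rest := rfl
theorem invN_inr (n : ℕ) (l : ℕ × Bool) (rest : List (Letter G)) :
    invN n (.inr l :: rest) =
      if l = (n, true) then rest else .inr (n, false) :: .inr l :: rest := rfl
theorem mulN_nil (n : ℕ) : mulN n ([] : List (Letter G)) = [.inr (n, true)] := rfl
theorem invN_nil (n : ℕ) : invN n ([] : List (Letter G)) = [.inr (n, false)] := rfl
theorem mulN_inl (n : ℕ) (h : {x : G // x ≠ 1}) (rest : List (Letter G)) :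
    mulN n (.inl h :: rest) = .inr (n, true) :: .inl h :: rest := rfl
theorem invN_inl (n : ℕ) (h : {x : G // x ≠ 1}) (rest : List (Letter G)) :
    invN n (.inl h :: rest) = .inr (n, false) :: .inl h :: rest := rfl

theorem Red.mulN {n : ℕ} {L : List (Letter G)} (hL : Red L) : Red (mulN n L) := by
  match L with
  | .inr l :: rest =>
    rw [mulN_inr]
    split
    · exact hL.tail
    · refine red_cons hL (fun y hy => ?_)
      simp only [List.head?] at hy
      cases hy
      simp only [good]
      rename_i hne
      simpa using fun h => hne (by simp [h])
  | [] => exact List.isChain_singleton _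
  | .inl h :: rest => exact red_cons hL (by simp [good])

theorem Red.invN {n : ℕ} {L : List (Letter G)} (hL : Red L) : Red (invN n L) := by
  match L with
  | .inr l :: rest =>
    rw [invN_inr]
    split
    · exact hL.tail
    · refine red_cons hL (fun y hy => ?_)
      simp only [List.head?] at hy
      cases hy
      simp only [good]
      rename_i hne
      simpa using fun h => hne (by simp [h])
  | [] => exact List.isChain_singleton _
  | .inl h :: rest => exact red_cons hL (by simp [good])

theorem invN_mulN {n : ℕ} {L : List (Letter G)} (hL : Red L) : invN n (mulN n L) = L := by
  match L with
  | .inr l :: rest =>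
    rw [mulN_inr]
    by_cases hl : l = (n, false)
    · rw [if_pos hl]
      match rest with
      | [] => rw [invN_nil, hl]
      | .inl h :: t => rw [invN_inl, hl]
      | .inr l' :: t =>
        have : l' ≠ (n, true) := by
          have := hL.head
          simp only [good, hl] at this
          simpa using this
        rw [invN_inr, if_neg this, hl]
    · rw [if_neg hl, invN_inr, if_pos rfl]
  | [] => rw [mulN_nil, invN_inr, if_pos rfl]
  | .inl h :: rest => rw [mulN_inl, invN_inr, if_pos rfl]

theorem mulN_invN {n : ℕ} {L : List (Letter G)} (hL : Red L) : mulN n (invN n L) = L := by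
  match L with
  | .inr l :: rest =>
    rw [invN_inr]
    by_cases hl : l = (n, true)
    · rw [if_pos hl]
      match rest with
      | [] => rw [mulN_nil, hl]
      | .inl h :: t => rw [mulN_inl, hl]
      | .inr l' :: t =>
        have : l' ≠ (n, false) := by
          have := hL.head
          simp only [good, hl] at this
          simpa using this
        rw [mulN_inr, if_neg this, hl]
    · rw [if_neg hl, mulN_inr, if_pos rfl]
  | [] => rw [invN_nil, mulN_inr, if_pos rfl]
  | .inl h :: rest => rw [invN_inl, mulN_inr, if_pos rfl]


/-- The first free-group letter, skipping a potential leading group letter. -/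
def headF : List (Letter G) → Option (ℕ × Bool)
  | [] => none
  | .inl _ :: rest =>
      match rest with
      | .inr l :: _ => some l
      | _ => none
  | .inr l :: _ => some l

theorem headF_mulL {a : G} {L : List (Letter G)} (hL : Red L) :
    headF (mulL a L) = headF L := by
  match L with
  | .inl h :: rest =>
    show headF (if hah : a * h.1 = 1 then rest else .inl ⟨a * h.1, hah⟩ :: rest) = _
    split
    · match rest with
      | [] => rfl
      | .inr l :: t => rfl
      | .inl h' :: t => exact absurd hL.head (by simp [good])
    · rfl
  | [] =>
    show headF (if ha : a = 1 then ([] : List (Letter G)) else [.inl ⟨a, ha⟩]) = _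
    split <;> rfl
  | .inr l :: rest =>
    show headF (if ha : a = 1 then _ else .inl ⟨a, ha⟩ :: .inr l :: rest) = _
    split <;> rfl

theorem headF_mulN {n : ℕ} {L : List (Letter G)} (h : headF L ≠ some (n, false)) :
    headF (mulN n L) = some (n, true) := by
  match L with
  | [] => rfl
  | .inl g :: rest => rfl
  | .inr l :: rest =>
    have hl : l ≠ (n, false) := fun hl => h (by rw [hl]; rfl)
    show headF (if l = (n, false) then rest else _) = _
    rw [if_neg hl]; rfl

theorem headF_invN {n : ℕ} {L : List (Letter G)} (h : headF L ≠ some (n, true)) :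
    headF (invN n L) = some (n, false) := by
  match L with
  | [] => rfl
  | .inl g :: rest => rfl
  | .inr l :: rest =>
    have hl : l ≠ (n, true) := fun hl => h (by rw [hl]; rfl)
    show headF (if l = (n, true) then rest else _) = _
    rw [if_neg hl]; rfl


/-- The space of reduced words, on which `G ∗ F(ℕ)` acts. -/
def Sp (G : Type) [Group G] : Type := {L : List (Letter G) // Red L}

noncomputable instance : MulAction G (Sp G) where
  smul a x := ⟨mulL a x.1, x.2.mulL⟩
  one_smul x := Subtype.ext (mulL_one x.1)
  mul_smul a b x := Subtype.ext (mulL_mul a b x.1 x.2)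

theorem smulG_def (a : G) (x : Sp G) : (a • x).1 = mulL a x.1 := rfl

/-- The permutation given by the free generator `bₙ`. -/
noncomputable def permN (n : ℕ) : Equiv.Perm (Sp G) where
  toFun x := ⟨mulN n x.1, x.2.mulN⟩
  invFun x := ⟨invN n x.1, x.2.invN⟩
  left_inv x := Subtype.ext (invN_mulN x.2)
  right_inv x := Subtype.ext (mulN_invN x.2)

variable (G) in
abbrev K : Type := Monoid.Coprod G (FreeGroup ℕ)

/-- The action of `G ∗ F(ℕ)` on reduced words. -/
noncomputable def rho : K G →* Equiv.Perm (Sp G) :=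
  Monoid.Coprod.lift (MulAction.toPermHom G (Sp G)) (FreeGroup.lift permN)

noncomputable instance : MulAction (K G) (Sp G) := MulAction.compHom _ rho

theorem smulK_def (k : K G) (x : Sp G) : k • x = rho k x := rfl

variable (g : ℕ → G)

/-- The elements `gₙ · bₙ` of `G ∗ F(ℕ)`. -/
noncomputable def aa (n : ℕ) : K G := Monoid.Coprod.inl (g n) * Monoid.Coprod.inr (.of n)

theorem psi_injective : Function.Injective (FreeGroup.lift (aa g)) := by
  apply FreeGroup.injective_lift_of_ping_pong (aa g)
      (X := fun n => {x : Sp G | headF x.1 = some (n, true)})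
      (Y := fun n => {x : Sp G | headF x.1 = some (n, false)})
  · intro i
    exact ⟨⟨[.inr (i, true)], List.isChain_singleton _⟩, rfl⟩
  · intro i j hij
    show Disjoint _ _
    rw [Set.disjoint_left]
    rintro x hx hx'
    simp only [Set.mem_setOf_eq] at hx hx'
    rw [hx] at hx'
    simp only [Option.some.injEq, Prod.mk.injEq] at hx'
    exact hij hx'.1
  · intro i j hij
    show Disjoint _ _
    rw [Set.disjoint_left]
    rintro x hx hx'
    simp only [Set.mem_setOf_eq] at hx hx'
    rw [hx] at hx'
    simp only [Option.some.injEq, Prod.mk.injEq] at hx'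
    exact hij hx'.1
  · intro i j
    rw [Set.disjoint_left]
    rintro x hx hx'
    simp only [Set.mem_setOf_eq] at hx hx'
    rw [hx] at hx'
    simp at hx'
  · intro i x hx
    rcases hx with ⟨y, hy, rfl⟩
    simp only [Set.mem_compl_iff, Set.mem_setOf_eq] at hy
    show headF ((aa g i) • y).1 = some (i, true)
    have : (aa g i) • y = (g i) • (permN i y) := by
      rw [smulK_def, aa, map_mul, Equiv.Perm.mul_apply]
      rw [rho, Monoid.Coprod.lift_apply_inl, Monoid.Coprod.lift_apply_inr, FreeGroup.lift_apply_of]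
      rfl
    rw [this, smulG_def]
    show headF (mulL (g i) (mulN i y.1)) = some (i, true)
    rw [headF_mulL (Red.mulN y.2)]
    exact headF_mulN hy
  · intro i x hx
    rcases hx with ⟨y, hy, rfl⟩
    simp only [Set.mem_compl_iff, Set.mem_setOf_eq] at hy
    show headF ((aa g)⁻¹ i • y).1 = some (i, false)
    have h1 : (aa g)⁻¹ i = Monoid.Coprod.inr ((FreeGroup.of i)⁻¹) *
        Monoid.Coprod.inl ((g i)⁻¹) := by
      rw [Pi.inv_apply, aa, mul_inv_rev, map_inv, map_inv]
    have : (aa g)⁻¹ i • y = (permN i)⁻¹ (((g i)⁻¹) • y) := by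
      rw [smulK_def, h1, map_mul, Equiv.Perm.mul_apply]
      rw [rho, Monoid.Coprod.lift_apply_inl, Monoid.Coprod.lift_apply_inr, map_inv,
        FreeGroup.lift_apply_of]
      rfl
    rw [this]
    show headF (invN i (((g i)⁻¹) • y).1) = some (i, false)
    rw [smulG_def]
    apply headF_invN
    rw [headF_mulL y.2]
    exact hy


theorem aa_def (g : ℕ → G) (n : ℕ) :
    aa g n = Monoid.Coprod.inl (g n) * Monoid.Coprod.inr (.of n) := rfl

/-- `ψ : F(ℕ) →* G ∗ F(ℕ)`, `bₙ ↦ gₙbₙ`. -/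
noncomputable def psi : FreeGroup ℕ →* K G := FreeGroup.lift (aa g)

/-- `F(ℕ) →* G ∗ F(ℕ)` the canonical inclusion. -/
def inrK : FreeGroup ℕ →* K G := Monoid.Coprod.inr

theorem inrK_injective : Function.Injective (inrK (G := G)) :=
  Monoid.Coprod.inr_injective

noncomputable def phi1 : (inrK (G := G)).range ≃* (psi g).range :=
  (MonoidHom.ofInjective inrK_injective).symm.trans (MonoidHom.ofInjective (psi_injective g))

theorem phi1_apply (x : FreeGroup ℕ) :
    (phi1 g ⟨inrK x, ⟨x, rfl⟩⟩ : K G) = psi g x := by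
  have h1 : (⟨inrK x, ⟨x, rfl⟩⟩ : (inrK (G := G)).range) =
      MonoidHom.ofInjective inrK_injective x :=
    Subtype.ext (MonoidHom.ofInjective_apply _).symm
  rw [phi1, MulEquiv.trans_apply, h1, MulEquiv.symm_apply_apply]
  exact MonoidHom.ofInjective_apply _

/-- The first HNN extension. -/
noncomputable abbrev E1 : Type := HNNExtension (K G) (inrK (G := G)).range (psi g).range (phi1 g)

theorem e1_conj (x : FreeGroup ℕ) :
    (HNNExtension.of (psi g x) : E1 g) =
      HNNExtension.t * HNNExtension.of (Monoid.Coprod.inr x) * HNNExtension.t⁻¹ := by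
  have := HNNExtension.equiv_eq_conj (φ := phi1 g) ⟨inrK x, ⟨x, rfl⟩⟩
  rwa [phi1_apply] at this

/-- Shift on the free group. -/
def sh : FreeGroup ℕ →* FreeGroup ℕ := FreeGroup.map Nat.succ

theorem sh_of (n : ℕ) : sh (FreeGroup.of n) = FreeGroup.of (n + 1) := FreeGroup.map.of

theorem sh_injective : Function.Injective sh := by
  intro x y h
  rw [sh] at h
  have hx := congrArg (FreeGroup.map Nat.pred) h
  rwa [FreeGroup.map.comp, FreeGroup.map.comp,
    show Nat.pred ∘ Nat.succ = id from rfl, FreeGroup.map.id, FreeGroup.map.id] at hx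

noncomputable def j1 : FreeGroup ℕ →* E1 g := HNNExtension.of.comp (inrK (G := G))

theorem j1_injective : Function.Injective (j1 g) :=
  fun _ _ h => inrK_injective (HNNExtension.of_injective (φ := phi1 g) h)

noncomputable def j2 : FreeGroup ℕ →* E1 g := (j1 g).comp sh

theorem j2_injective : Function.Injective (j2 g) := (j1_injective g).comp sh_injective

noncomputable def phi2 : (j1 g).range ≃* (j2 g).range :=
  (MonoidHom.ofInjective (j1_injective g)).symm.trans (MonoidHom.ofInjective (j2_injective g))

theorem phi2_apply (x : FreeGroup ℕ) :
    (phi2 g ⟨j1 g x, ⟨x, rfl⟩⟩ : E1 g) = j1 g (sh x) := by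
  have h1 : (⟨j1 g x, ⟨x, rfl⟩⟩ : (j1 g).range) =
      MonoidHom.ofInjective (j1_injective g) x :=
    Subtype.ext (MonoidHom.ofInjective_apply _).symm
  rw [phi2, MulEquiv.trans_apply, h1, MulEquiv.symm_apply_apply]
  exact MonoidHom.ofInjective_apply _

/-- The second HNN extension. -/
noncomputable abbrev E2 : Type := HNNExtension (E1 g) (j1 g).range (j2 g).range (phi2 g)

theorem e2_conj (x : FreeGroup ℕ) :
    (HNNExtension.of (j1 g (sh x)) : E2 g) =
      HNNExtension.t * HNNExtension.of (j1 g x) * HNNExtension.t⁻¹ := by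
  have := HNNExtension.equiv_eq_conj (φ := phi2 g) ⟨j1 g x, ⟨x, rfl⟩⟩
  rwa [phi2_apply] at this

/-- The embedding of `G` into `E2`. -/
noncomputable def beta : G →* E2 g :=
  HNNExtension.of.comp (HNNExtension.of.comp (Monoid.Coprod.inl : G →* K G))

theorem beta_injective : Function.Injective (beta g) :=
  fun _ _ h => Monoid.Coprod.inl_injective
    (HNNExtension.of_injective (φ := phi1 g)
      (HNNExtension.of_injective (φ := phi2 g) h))

/-- The three generators. -/
noncomputable def gens : Set (E2 g) :=
  {HNNExtension.t, HNNExtension.of HNNExtension.t,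
    HNNExtension.of (HNNExtension.of (inrK (FreeGroup.of 0)))}

noncomputable def u (n : ℕ) : E2 g := HNNExtension.of (j1 g (FreeGroup.of n))

theorem u_mem (n : ℕ) : u g n ∈ Subgroup.closure (gens g) := by
  induction n with
  | zero =>
    apply Subgroup.subset_closure
    right; right; rfl
  | succ n ih =>
    have : u g (n + 1) = HNNExtension.t * u g n * HNNExtension.t⁻¹ := by
      rw [u, ← sh_of, e2_conj]
      rfl
    rw [this]
    exact mul_mem (mul_mem (Subgroup.subset_closure (by left; rfl)) ih)
      (inv_mem (Subgroup.subset_closure (by left; rfl)))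

theorem beta_mem (n : ℕ) : beta g (g n) ∈ Subgroup.closure (gens g) := by
  have h1 : psi g (FreeGroup.of n) =
      Monoid.Coprod.inl (g n) * Monoid.Coprod.inr (.of n) := by
    rw [psi, FreeGroup.lift_apply_of, aa_def]
  have h2 : (HNNExtension.of (psi g (FreeGroup.of n)) : E1 g) =
      HNNExtension.t * HNNExtension.of (Monoid.Coprod.inr (FreeGroup.of n)) * HNNExtension.t⁻¹ :=
    e1_conj g (FreeGroup.of n)
  rw [h1, map_mul] at h2
  have h3 : (HNNExtension.of (Monoid.Coprod.inl (g n) : K G) : E1 g) =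
      HNNExtension.t * HNNExtension.of (Monoid.Coprod.inr (FreeGroup.of n)) * HNNExtension.t⁻¹ *
        (HNNExtension.of (Monoid.Coprod.inr (FreeGroup.of n)))⁻¹ := by
    rw [← h2]
    group
  have h4 : beta g (g n) = HNNExtension.of (HNNExtension.t : E1 g) * u g n *
      (HNNExtension.of (HNNExtension.t : E1 g))⁻¹ * (u g n)⁻¹ := by
    rw [beta, MonoidHom.comp_apply, MonoidHom.comp_apply, h3]
    simp only [map_mul, map_inv]
    rfl
  rw [h4]
  have ht : (HNNExtension.of (HNNExtension.t : E1 g) : E2 g) ∈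
      Subgroup.closure (gens g) :=
    Subgroup.subset_closure (by right; left; rfl)
  exact mul_mem (mul_mem (mul_mem ht (u_mem g n)) (inv_mem ht)) (inv_mem (u_mem g n))

theorem master (G : Type) [Group G] [Countable G] :
    ∃ (H' : Type) (_ : Group H'), Group.FG H' ∧
      ∃ f : G →* Monoid.Coprod H'
          (Monoid.Coprod (Multiplicative ℤ) (Multiplicative (ZMod 2))),
        Function.Injective f := by
  obtain ⟨g, hg⟩ := exists_surjective_nat G
  set Hsub : Subgroup (E2 g) := Subgroup.closure (gens g) with hHsub
  have hmem : ∀ x : G, beta g x ∈ Hsub := by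
    intro x
    obtain ⟨n, rfl⟩ := hg x
    exact beta_mem g n
  refine ⟨Hsub, inferInstance, ?_, ?_⟩
  · rw [Group.fg_iff_subgroup_fg]
    rw [Subgroup.fg_iff]
    refine ⟨gens g, rfl, ?_⟩
    rw [gens]
    apply Set.toFinite
  · refine ⟨(Monoid.Coprod.inl).comp ((beta g).codRestrict Hsub hmem), ?_⟩
    exact Monoid.Coprod.inl_injective.comp
      (fun x y h => beta_injective g (congrArg Subtype.val h))


end HNNEmbed

/-- Every countable group `G` embeds into a finitely generated group of the form
`H' ∗ ℤ ∗ (ℤ/2ℤ)`, where `∗` denotes the free product (coproduct) of groups. -/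
theorem countable_group_embeds_in_fg_free_product (G : Type*) [Group G] [Countable G] :
    ∃ (H' : Type) (_ : Group H'), Group.FG H' ∧
      ∃ f : G →* Monoid.Coprod H'
          (Monoid.Coprod (Multiplicative ℤ) (Multiplicative (ZMod 2))),
        Function.Injective f := by
  have hsmall : Small.{0} G := Countable.toSmall G
  have hcount : Countable (Shrink.{0} G) := (equivShrink G).symm.injective.comp
    (fun _ _ h => h) |>.countable
  obtain ⟨H', hgrp, hfg, f, hf⟩ := HNNEmbed.master (Shrink.{0} G)
  refine ⟨H', hgrp, hfg, f.comp (Shrink.mulEquiv (α := G)).symm.toMonoidHom, ?_⟩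
  exact hf.comp (Shrink.mulEquiv (α := G)).symm.injective
end
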